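/- arXiv:2302.03797 — 2 statements merged into one kernel-verified Lean document; each statement's English description precedes it below -/
import Mathlib

section
/- If the adjacency multisets of two related chromosomes π and τ differ, i.e., A[π] ≠ A[τ], then no sequence of symmetric reversals transforms π into τ. -/
/-!
A symmetric reversal replaces the block `x m (-x)` by its reversed negation `x (-m)ʳ (-x)`,
so it only rereads that block backwards. Reading an adjacency `⟨r(u), l(v)⟩` backwards gives
`⟨r(-v), l(-u)⟩ = ⟨l(v), r(u)⟩`, the same unordered pair, hence `A[π]` is invariant.
-/

open List

variable {α : Type*}

/-- A signed symbol: (name, orientation); `true` means positive. -/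
abbrev SSym (α : Type*) := α × Bool

/-- Negation (orientation flip) of a signed symbol. -/
def symNeg (x : SSym α) : SSym α := (x.1, !x.2)

/-- Left node of an occurrence: a node `(a, true)` denotes the head `aʰ`,
and `(a, false)` denotes the tail `aᵗ`; a positive occurrence contributes
`(aʰ, aᵗ)`, a negative one `(aᵗ, aʰ)`. -/
def lnode (x : SSym α) : SSym α := x

/-- Right node of an occurrence. -/
def rnode (x : SSym α) : SSym α := (x.1, !x.2)

/-- The unordered adjacency between two consecutive occurrences. -/
def adjOf (u v : SSym α) : Multiset (SSym α) := {rnode u, lnode v}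

/-- The multiset of adjacencies of a chromosome. -/
def adjMS : List (SSym α) → Multiset (Multiset (SSym α))
  | u :: v :: rest => adjOf u v ::ₘ adjMS (v :: rest)
  | _ => 0

/-- Reversed and negated form of a segment. -/
def revneg (s : List (SSym α)) : List (SSym α) := (s.map symNeg).reverse

/-- One symmetric reversal: the reversed segment is flanked by a pair of
inverted occurrences of the same repeat. -/
def SymRev (π π' : List (SSym α)) : Prop :=
  ∃ (p m q : List (SSym α)) (x : SSym α),
    π = p ++ x :: m ++ symNeg x :: q ∧
    π' = p ++ x :: revneg m ++ symNeg x :: q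

/-- A symmetric reversal performed on the repeat `a`. -/
def SymRevOn (a : α) (π π' : List (SSym α)) : Prop :=
  ∃ (p m q : List (SSym α)) (x : SSym α), x.1 = a ∧
    π = p ++ x :: m ++ symNeg x :: q ∧
    π' = p ++ x :: revneg m ++ symNeg x :: q

/-- `π` can be transformed into `τ` by a series of symmetric reversals. -/
def Transformable (π τ : List (SSym α)) : Prop := Relation.ReflTransGen SymRev π τ

/-- `π` can be transformed into `τ` by exactly `m` symmetric reversals. -/
def ChainRev : ℕ → List (SSym α) → List (SSym α) → Prop
  | 0, π, τ => π = τ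
  | n + 1, π, τ => ∃ π', SymRev π π' ∧ ChainRev n π' τ

/-- A chromosome is flanked by `+r₀` and `-r₀`. -/
def IsChromosome (r₀ : α) (π : List (SSym α)) : Prop :=
  ∃ m : List (SSym α), π = (r₀, true) :: m ++ [(r₀, false)]

/-- Duplication number of symbol `a` in `π` (occurrences in both orientations). -/
def dpCount [DecidableEq α] (a : α) (π : List (SSym α)) : ℕ := (π.map Prod.fst).count a

/-- Related chromosomes: identical duplication numbers for every gene/repeat. -/
def Related [DecidableEq α] (π τ : List (SSym α)) : Prop := ∀ a, dpCount a π = dpCount a τ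

/-- A chromosome is simple if every adjacency appears only once. -/
def Simple [DecidableEq α] (π : List (SSym α)) : Prop := ∀ A, (adjMS π).count A ≤ 1

/-- Deletion of all occurrences of the repeat `b`. -/
def delSym [DecidableEq α] (b : α) (π : List (SSym α)) : List (SSym α) :=
  π.filter fun x => decide (x.1 ≠ b)

/-- The repeat `a` is neighbor-consistent: the two adjacencies flanking any of its
occurrences in `π` are matched to the two adjacencies flanking a single
occurrence of `a` in `τ`. -/
def NeighborConsistent (π τ : List (SSym α)) (a : α) : Prop :=
  ∀ (p q : List (SSym α)) (u x v : SSym α),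
    π = p ++ u :: x :: v :: q → x.1 = a →
    ∃ (p' q' : List (SSym α)) (u' y v' : SSym α),
      τ = p' ++ u' :: y :: v' :: q' ∧ y.1 = a ∧
      ({adjOf u x, adjOf x v} : Multiset (Multiset (SSym α))) =
        {adjOf u' y, adjOf y v'}

/-- The repeat `a` is black in `IG(π, τ)`: its two occurrences in `π`
have opposite signs. -/
def Black (π : List (SSym α)) (a : α) : Prop :=
  ∃ (p q r : List (SSym α)) (x y : SSym α),
    π = p ++ x :: q ++ y :: r ∧ x.1 = a ∧ y.1 = a ∧ x.2 ≠ y.2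

/-- The occurrence intervals of the repeats `a` and `b` interleave in `π`
(the adjacency relation of the intersection graph `IG(π, τ)`). -/
def Interleaves (π : List (SSym α)) (a b : α) : Prop :=
  a ≠ b ∧ ∃ (p q r s t : List (SSym α)) (x y x' y' : SSym α),
    x.1 = a ∧ x'.1 = a ∧ y.1 = b ∧ y'.1 = b ∧
    (π = p ++ x :: q ++ y :: r ++ x' :: s ++ y' :: t ∨
     π = p ++ y :: q ++ x :: r ++ y' :: s ++ x' :: t)

/-- Two repeats are in the same connected component of the intersection graph. -/
def InSameComponent (π : List (SSym α)) : α → α → Prop :=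
  Relation.ReflTransGen (Interleaves π)

/-- An abstract vertex-colored, vertex-weighted graph (intersection graph). -/
structure ColoredGraph (V : Type*) where
  adj : V → V → Prop
  black : V → Prop
  weight : V → ℕ

/-- The effect of performing a symmetric reversal on a black vertex `x`:
(rule-I) the colors of all neighbors of `x` are toggled; (rule-II) adjacency
among the neighbors of `x` is complemented; (rule-III) the weight of `x`
is decremented (and `x` is deleted when the weight reaches `0`). -/
def reverseAt {V : Type*} [DecidableEq V] (G : ColoredGraph V) (x : V) :
    ColoredGraph V where
  adj u v := (G.adj x u ∧ G.adj x v ∧ ¬ G.adj u v ∧ u ≠ v) ∨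
    (¬ (G.adj x u ∧ G.adj x v) ∧ G.adj u v)
  black v := (G.adj x v ∧ ¬ G.black v) ∨ (¬ G.adj x v ∧ G.black v)
  weight v := if v = x then G.weight v - 1 else G.weight v

/-- Reachability in a colored graph avoiding deleted (`dead`) vertices. -/
def Reach {V : Type*} (G : ColoredGraph V) (dead : V → Prop) : V → V → Prop :=
  Relation.ReflTransGen (fun u v => G.adj u v ∧ ¬ dead u ∧ ¬ dead v)

/-- The 2-balanced condition: any two occurrences of the same repeat in `τ`
have opposite signs. -/
def BalancedTarget (τ : List (SSym α)) : Prop :=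
  ∀ (p q r : List (SSym α)) (x y : SSym α),
    τ = p ++ x :: q ++ y :: r → x.1 = y.1 → x.2 ≠ y.2

/-- The adjacency `⟨u, v⟩` of `π` is positive: it is matched to an adjacency
`⟨y_j, y_{j+1}⟩` of `τ` with `r(u) = r(y_j)` and `l(v) = l(y_{j+1})`, i.e.
`τ` contains the consecutive pair `u v` literally. -/
def PosIn (τ : List (SSym α)) (u v : SSym α) : Prop :=
  ∃ p q : List (SSym α), τ = p ++ u :: v :: q

/-- The adjacency `⟨u, v⟩` of `π` is negative: `τ` contains its reversed and
negated form. -/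
def NegIn (τ : List (SSym α)) (u v : SSym α) : Prop := PosIn τ (symNeg v) (symNeg u)

/-- Positive and not entangled. -/
def StrictPos (τ : List (SSym α)) (u v : SSym α) : Prop := PosIn τ u v ∧ ¬ NegIn τ u v

/-- Negative and not entangled. -/
def StrictNeg (τ : List (SSym α)) (u v : SSym α) : Prop := NegIn τ u v ∧ ¬ PosIn τ u v

/-- An entangled adjacency can be read both positively and negatively. -/
def EntangledAdj (τ : List (SSym α)) (u v : SSym α) : Prop := PosIn τ u v ∧ NegIn τ u v

/-- The occurrence `x` (with left neighbor `w` and right neighbor `v`) is a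
boundary: its left and right adjacencies have distinct directions. -/
def IsBoundary (τ : List (SSym α)) (w x v : SSym α) : Prop :=
  (StrictPos τ w x ∧ StrictNeg τ x v) ∨ (StrictNeg τ w x ∧ StrictPos τ x v)

/-- The list of consecutive pairs (adjacencies) of a chromosome. -/
def pairsOf (π : List (SSym α)) : List (SSym α × SSym α) := π.zip π.tail

/-- A direction assignment (`true` = positive) compatible with the bijection
between the adjacencies of `π` and `τ`. -/
def DirOK (τ π : List (SSym α)) (d : List Bool) : Prop :=
  List.Forall₂ (fun (pr : SSym α × SSym α) (b : Bool) =>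
    (b = true → PosIn τ pr.1 pr.2) ∧ (b = false → NegIn τ pr.1 pr.2)) (pairsOf π) d

/-- Number of maximal `false`-runs (maximal negative segments). -/
def nMNSAux : Bool → List Bool → ℕ
  | _, [] => 0
  | prev, b :: rest => (if prev = true ∧ b = false then 1 else 0) + nMNSAux b rest

def nMNS (d : List Bool) : ℕ := nMNSAux true d

/-- `N_MNS[π]`: the number of maximal negative segments of `π` relative to `τ`
(entangled adjacencies assigned so that the number of MNS is minimized,
i.e. taking the common direction of their neighbors). -/
noncomputable def NMNS (π τ : List (SSym α)) : ℕ :=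
  sInf { n | ∃ d : List Bool, DirOK τ π d ∧ n = nMNS d }

/-- A node position of the alternative-cycle graph: `(i, false)` is the left
node of the `i`-th occurrence of `π`, `(i, true)` its right node. -/
abbrev NodePos := ℕ × Bool

/-- The value (as a node of the form `aʰ`/`aᵗ`) sitting at a node position. -/
def nodeVal (π : List (SSym α)) (p : NodePos) : Option (SSym α) :=
  (π[p.1]?).map fun x => if p.2 then rnode x else lnode x

/-- The adjacency of `π` between positions `i` and `i+1`, if any. -/
def adjAt (π : List (SSym α)) (i : ℕ) : Option (Multiset (SSym α)) :=
  match π[i]?, π[i+1]? with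
  | some u, some v => some (adjOf u v)
  | _, _ => none

/-- `f` is a bijection matching each adjacency of `τ` with an identical
adjacency of `π`. -/
def AdjBijection (π τ : List (SSym α)) (f : ℕ → ℕ) : Prop :=
  Set.BijOn f (Set.Iio (τ.length - 1)) (Set.Iio (π.length - 1)) ∧
  ∀ k < τ.length - 1, adjAt τ k = adjAt π (f k)

/-- The blue edge of `ACG(π, τ, f)` corresponding to the `k`-th occurrence of
`τ`: it joins the node of the `f`-image of the adjacency on the left of `y_k`
carrying the value `l(y_k)` with the node of the `f`-image of the adjacency on
the right of `y_k` carrying the value `r(y_k)`. -/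
def IsBlueEdge (π τ : List (SSym α)) (f : ℕ → ℕ) (k : ℕ) (e₁ e₂ : NodePos) : Prop :=
  ∃ y : SSym α, τ[k]? = some y ∧
    (if k = 0 then e₁ = (0, false)
     else (e₁ = (f (k-1), true) ∨ e₁ = (f (k-1) + 1, false)) ∧
       nodeVal π e₁ = some (lnode y)) ∧
    (if k = τ.length - 1 then e₂ = (π.length - 1, true)
     else (e₂ = (f k, true) ∨ e₂ = (f k + 1, false)) ∧
       nodeVal π e₂ = some (rnode y))

/-- A green edge joins `r(x_i)` and `l(x_{i+1})` (an adjacency of `π`). -/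
def GreenEdge (p q : NodePos) : Prop :=
  (p.2 = true ∧ q = (p.1 + 1, false)) ∨ (q.2 = true ∧ p = (q.1 + 1, false))

/-- A step along a blue or a green edge. -/
def BGStep (π τ : List (SSym α)) (f : ℕ → ℕ) (p q : NodePos) : Prop :=
  GreenEdge p q ∨ ∃ k, IsBlueEdge π τ f k p q ∨ IsBlueEdge π τ f k q p

lemma adjMS_append_cons (l r : List (SSym α)) (x : SSym α) :
    adjMS (l ++ x :: r) = adjMS (l ++ [x]) + adjMS (x :: r) := by
  induction l with
  | nil => simp [adjMS]
  | cons a l ih =>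
    cases l with
    | nil => simp [adjMS]
    | cons b l => simp only [cons_append, adjMS] at *; rw [ih, Multiset.cons_add]

lemma adjMS_pair (u v : SSym α) : adjMS [u, v] = {adjOf u v} := rfl

lemma adjMS_append_cons_append_cons (p m q : List (SSym α)) (x z : SSym α) :
    adjMS (p ++ x :: m ++ z :: q)
      = adjMS (p ++ [x]) + adjMS (x :: (m ++ [z])) + adjMS (z :: q) := by
  rw [adjMS_append_cons (p ++ x :: m), append_assoc, cons_append, adjMS_append_cons p]

lemma adjOf_symNeg_symNeg (u v : SSym α) : adjOf (symNeg v) (symNeg u) = adjOf u v := by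
  simpa [adjOf, symNeg, rnode, lnode] using Multiset.pair_comm _ _

lemma revneg_cons (u : SSym α) (l : List (SSym α)) :
    revneg (u :: l) = revneg l ++ [symNeg u] := by
  simp [revneg]

lemma adjMS_revneg (l : List (SSym α)) : adjMS (revneg l) = adjMS l := by
  induction l with
  | nil => rfl
  | cons u l ih =>
    cases l with
    | nil => rfl
    | cons v l =>
      calc adjMS (revneg (u :: v :: l))
          = adjMS (revneg l ++ [symNeg v]) + adjMS [symNeg v, symNeg u] := by
            rw [revneg_cons, revneg_cons, append_assoc, singleton_append, adjMS_append_cons]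
        _ = adjMS (v :: l) + {adjOf u v} := by
            rw [← revneg_cons, ih, adjMS_pair, adjOf_symNeg_symNeg]
        _ = adjMS (u :: v :: l) := by rw [adjMS, add_comm, Multiset.singleton_add]

lemma revneg_cons_append_symNeg (x : SSym α) (m : List (SSym α)) :
    revneg (x :: (m ++ [symNeg x])) = x :: (revneg m ++ [symNeg x]) := by
  simp [revneg, symNeg]

lemma SymRev.adjMS_eq {π π' : List (SSym α)} (h : SymRev π π') : adjMS π = adjMS π' := by
  obtain ⟨p, m, q, x, rfl, rfl⟩ := h
  rw [adjMS_append_cons_append_cons, adjMS_append_cons_append_cons,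
    ← revneg_cons_append_symNeg, adjMS_revneg]

lemma Transformable.adjMS_eq {π τ : List (SSym α)} (h : Transformable π τ) :
    adjMS π = adjMS τ := by
  induction h with
  | refl => rfl
  | tail _ hstep ih => exact ih.trans hstep.adjMS_eq

theorem not_transformable_of_adjMS_ne_general
    (π τ : List (SSym α)) (hA : adjMS π ≠ adjMS τ) :
    ¬ Transformable π τ :=
  fun h => hA h.adjMS_eq

/-- if `A[π] ≠ A[τ]` then no sequence of symmetric reversals
transforms `π` into `τ`. -/
theorem not_transformable_of_adjMS_ne [DecidableEq α] (r₀ : α)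
    (π τ : List (SSym α)) (hπ : IsChromosome r₀ π) (hτ : IsChromosome r₀ τ)
    (hrel : Related π τ) (hA : adjMS π ≠ adjMS τ) :
    ¬ Transformable π τ :=
  not_transformable_of_adjMS_ne_general π τ hA
end

section
/- In the alternative-cycle graph ACG(π, τ, f), if for each 0 ≤ i ≤ n one adds a green edge joining r(x_i) and l(x_{i+1}), then the blue and green edges together form a single (blue–green alternating) path covering all nodes. -/
open List

variable {α : Type*}

/-!
Write `τ = y₀ … y_{n-1}`. The adjacency of `τ` between `y_k` and `y_{k+1}` is identical to the
adjacency `f k` of `π`, so one of its two nodes `r(x_{f k})`, `l(x_{f k + 1})` carries `r(y_k)` and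
the other carries `l(y_{k+1})`: the blue edge of `y_k` ends at one node of that adjacency and the
blue edge of `y_{k+1}` starts at the other, and the green edge of the adjacency joins them.
Concatenating the blue edges of `y₀, …, y_{n-1}` with these green edges gives a walk from `l(x₀)`
to `r(x_{n-1})` through `2n` nodes; since `f` is onto, every node of `π` occurs on it, so it is a
path through all `2n` nodes.
-/

theorem Multiset.pair_eq_pair_iff {X : Type*} {x y z w : X} :
    ({x, y} : Multiset X) = {z, w} ↔ x = z ∧ y = w ∨ x = w ∧ y = z := by
  refine ⟨fun h => by simpa using List.perm_pair.mp (Quotient.exact h), ?_⟩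
  rintro (⟨rfl, rfl⟩ | ⟨rfl, rfl⟩)
  · rfl
  · exact Multiset.pair_comm _ _

theorem List.nodup_of_length_le_card {β : Type*} [DecidableEq β] {l : List β} {s : Finset β}
    (hs : ∀ x ∈ s, x ∈ l) (hl : l.length ≤ s.card) : l.Nodup := by
  have hsub : s ⊆ l.toFinset := fun x hx => List.mem_toFinset.2 (hs x hx)
  have hcard : l.toFinset.card = l.length :=
    le_antisymm l.toFinset_card_le (hl.trans (Finset.card_le_card hsub))
  exact Multiset.toFinset_card_eq_card_iff_nodup.mp hcard

theorem IsChromosome.two_le_length {r₀ : α} {π : List (SSym α)} (h : IsChromosome r₀ π) :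
    2 ≤ π.length := by
  obtain ⟨m, rfl⟩ := h
  simp

theorem card_adjMS : ∀ l : List (SSym α), Multiset.card (adjMS l) = l.length - 1
  | [] | [_] => rfl
  | u :: v :: rest => by simp [adjMS, card_adjMS (v :: rest)]

theorem length_eq_of_adjMS_eq {π τ : List (SSym α)} (h : adjMS π = adjMS τ)
    (hπ : 2 ≤ π.length) : τ.length = π.length := by
  have := congrArg Multiset.card h
  rw [card_adjMS, card_adjMS] at this
  omega

/-- The two nodes of the `i`-th adjacency of `π`: `r(x_i)` for `true`, `l(x_{i+1})` for `false`. -/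
def adjNode (i : ℕ) (c : Bool) : NodePos := if c then (i, true) else (i + 1, false)

theorem adjNode_eq_or (i : ℕ) (c : Bool) :
    adjNode i c = (i, true) ∨ adjNode i c = (i + 1, false) := by
  cases c <;> simp [adjNode]

theorem adjNode_fst_le (i : ℕ) (c : Bool) : (adjNode i c).1 ≤ i + 1 := by
  cases c <;> simp [adjNode]

theorem greenEdge_adjNode (i : ℕ) (c : Bool) : GreenEdge (adjNode i c) (adjNode i !c) := by
  cases c <;> simp [adjNode, GreenEdge]

theorem eq_or_eq_or_exists_adjNode_eq {n : ℕ} {p : NodePos} (hp : p.1 < n) :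
    p = (0, false) ∨ p = (n - 1, true) ∨ ∃ i c, i + 1 < n ∧ p = adjNode i c := by
  obtain ⟨i, _ | _⟩ := p
  · rcases i with _ | i
    · exact .inl rfl
    · exact .inr (.inr ⟨i, false, hp, rfl⟩)
  · by_cases hi : i = n - 1
    · exact .inr (.inl (by rw [hi]))
    · exact .inr (.inr ⟨i, true, by dsimp only at hp; omega, rfl⟩)

theorem exists_nodeVal_adjNode_eq {π τ : List (SSym α)} {k i : ℕ}
    (h : adjAt τ k = adjAt π i) (hi : i + 1 < π.length) :
    ∃ c, nodeVal π (adjNode i c) = τ[k]?.map rnode ∧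
      nodeVal π (adjNode i !c) = τ[k + 1]?.map lnode := by
  have hπi : adjAt π i = some (adjOf π[i] π[i + 1]) := by
    simp [adjAt, List.getElem?_eq_getElem hi, List.getElem?_eq_getElem (Nat.lt_of_succ_lt hi)]
  rw [hπi] at h
  unfold adjAt at h
  rcases hy : τ[k]? with _ | y <;> rcases hy' : τ[k + 1]? with _ | y' <;>
    simp only [hy, hy', reduceCtorEq, Option.some_inj] at h
  rcases Multiset.pair_eq_pair_iff.mp h with ⟨h₁, h₂⟩ | ⟨h₁, h₂⟩
  · refine ⟨true, ?_, ?_⟩ <;> simp [adjNode, nodeVal, h₁, h₂, List.getElem?_eq_getElem hi,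
      List.getElem?_eq_getElem (Nat.lt_of_succ_lt hi)]
  · refine ⟨false, ?_, ?_⟩ <;> simp [adjNode, nodeVal, h₁, h₂, List.getElem?_eq_getElem hi,
      List.getElem?_eq_getElem (Nat.lt_of_succ_lt hi)]

/-- `c k` tells which of the two nodes of the adjacency `f k` of `π` carries `r(y_k)`. -/
def IsOrientation (π τ : List (SSym α)) (f : ℕ → ℕ) (c : ℕ → Bool) : Prop :=
  ∀ k, k + 1 < τ.length → nodeVal π (adjNode (f k) (c k)) = τ[k]?.map rnode ∧
    nodeVal π (adjNode (f k) !(c k)) = τ[k + 1]?.map lnode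

theorem AdjBijection.exists_isOrientation {π τ : List (SSym α)} {f : ℕ → ℕ}
    (hf : AdjBijection π τ f) : ∃ c, IsOrientation π τ f c := by
  have h : ∀ k, ∃ c, k + 1 < τ.length → nodeVal π (adjNode (f k) c) = τ[k]?.map rnode ∧
      nodeVal π (adjNode (f k) !c) = τ[k + 1]?.map lnode := by
    intro k
    by_cases hk : k + 1 < τ.length
    · have hfk : f k < π.length - 1 := hf.1.mapsTo (show k < τ.length - 1 by omega)
      obtain ⟨c, hc⟩ := exists_nodeVal_adjNode_eq (hf.2 k (by omega)) (by omega)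
      exact ⟨c, fun _ => hc⟩
    · exact ⟨true, fun h => absurd h hk⟩
  choose c hc using h
  exact ⟨c, hc⟩

section BGPath

variable (n : ℕ) (f : ℕ → ℕ) (c : ℕ → Bool)

def blueStart (k : ℕ) : NodePos :=
  if k = 0 then (0, false) else adjNode (f (k - 1)) !(c (k - 1))

def blueEnd (k : ℕ) : NodePos :=
  if k = n - 1 then (n - 1, true) else adjNode (f k) (c k)

def bgPath : List NodePos :=
  ((List.range n).map fun k => [blueStart f c k, blueEnd n f c k]).flatten

theorem length_bgPath : (bgPath n f c).length = 2 * n := by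
  simp [bgPath, List.length_flatten, Function.comp_def, mul_comm]

theorem mem_bgPath {p : NodePos} :
    p ∈ bgPath n f c ↔ ∃ k < n, p = blueStart f c k ∨ p = blueEnd n f c k := by
  simp [bgPath, eq_comm]

variable {n f}

theorem adjNode_mem_bgPath {k : ℕ} (hk : k + 1 < n) (b : Bool) :
    adjNode (f k) b ∈ bgPath n f c := by
  rw [mem_bgPath]
  by_cases hb : b = c k
  · exact ⟨k, by omega, .inr (by rw [blueEnd, if_neg (by omega), hb])⟩
  · exact ⟨k + 1, hk, .inl (by simp [blueStart, Bool.eq_not.mpr hb])⟩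


theorem fst_lt_of_mem_bgPath (hf : Set.MapsTo f (Set.Iio (n - 1)) (Set.Iio (n - 1)))
    {p : NodePos} (hp : p ∈ bgPath n f c) : p.1 < n := by
  obtain ⟨k, hk, rfl | rfl⟩ := (mem_bgPath n f c).mp hp
  · unfold blueStart
    split_ifs with hk0
    · show 0 < n; omega
    · have : f (k - 1) < n - 1 := hf (show k - 1 < n - 1 by omega)
      have := adjNode_fst_le (f (k - 1)) !(c (k - 1))
      omega
  · unfold blueEnd
    split_ifs with hkn
    · show n - 1 < n; omega
    · have : f k < n - 1 := hf (show k < n - 1 by omega)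
      have := adjNode_fst_le (f k) (c k)
      omega

theorem mem_bgPath_of_fst_lt (hf : Set.SurjOn f (Set.Iio (n - 1)) (Set.Iio (n - 1)))
    {p : NodePos} (hp : p.1 < n) : p ∈ bgPath n f c := by
  rcases eq_or_eq_or_exists_adjNode_eq hp with rfl | rfl | ⟨i, b, hi, rfl⟩
  · exact (mem_bgPath n f c).mpr ⟨0, hp, .inl rfl⟩
  · exact (mem_bgPath n f c).mpr ⟨n - 1, by simpa using hp, .inr (by simp [blueEnd])⟩
  · obtain ⟨k, hk, rfl⟩ := hf (show i < n - 1 by omega)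
    exact adjNode_mem_bgPath c (show k + 1 < n by rw [Set.mem_Iio] at hk; omega) b

theorem nodup_bgPath (hf : Set.SurjOn f (Set.Iio (n - 1)) (Set.Iio (n - 1))) :
    (bgPath n f c).Nodup := by
  refine List.nodup_of_length_le_card (s := Finset.range n ×ˢ Finset.univ) ?_ ?_
  · intro p hp
    exact mem_bgPath_of_fst_lt c hf (Finset.mem_range.mp (Finset.mem_product.mp hp).1)
  · simp [length_bgPath, mul_comm]

theorem isBlueEdge_bgPath {π τ : List (SSym α)} (hlen : τ.length = π.length)
    (hc : IsOrientation π τ f c) {k : ℕ} (hk : k < π.length) :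
    IsBlueEdge π τ f k (blueStart f c k) (blueEnd π.length f c k) := by
  refine ⟨τ[k], List.getElem?_eq_getElem (by omega), ?_, ?_⟩
  · split_ifs with hk0
    · simp [blueStart, hk0]
    · have := (hc (k - 1) (by omega)).2
      rw [Nat.sub_add_cancel (by omega), List.getElem?_eq_getElem (by omega)] at this
      simpa [blueStart, hk0, this] using adjNode_eq_or (f (k - 1)) !(c (k - 1))
  · split_ifs with hkn
    · simp [blueEnd, hkn, hlen]
    · have := (hc k (by omega)).1
      rw [List.getElem?_eq_getElem (by omega)] at this
      simpa [blueEnd, hlen ▸ hkn, this] using adjNode_eq_or (f k) (c k)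

theorem isChain_bgPath {π τ : List (SSym α)} (hlen : τ.length = π.length)
    (hc : IsOrientation π τ f c) : (bgPath π.length f c).IsChain (BGStep π τ f) := by
  rw [bgPath, List.isChain_flatten (by simp), List.isChain_map, List.isChain_range]
  refine ⟨?_, ?_⟩
  · simp only [List.mem_map, List.mem_range]
    rintro _ ⟨k, hk, rfl⟩
    exact List.isChain_pair.mpr (.inr ⟨k, .inl (isBlueEdge_bgPath c hlen hc hk)⟩)
  · intro k hk
    have hend : blueEnd π.length f c k = adjNode (f k) (c k) := by
      rw [blueEnd, if_neg (by omega)]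
    have hstart : blueStart f c (k + 1) = adjNode (f k) !(c k) := by simp [blueStart]
    simpa [hend, hstart] using .inl (greenEdge_adjNode (f k) (c k))

end BGPath

theorem blue_green_form_path_general (r₀ : α)
    (π τ : List (SSym α)) (f : ℕ → ℕ)
    (hπ : IsChromosome r₀ π)
    (hA : adjMS π = adjMS τ)
    (hf : AdjBijection π τ f) :
    ∃ L : List NodePos, L.Nodup ∧
      (∀ p : NodePos, p ∈ L ↔ p.1 < π.length) ∧
      List.Chain' (BGStep π τ f) L := by
  have hlen := length_eq_of_adjMS_eq hA hπ.two_le_length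
  have hbij : Set.BijOn f (Set.Iio (π.length - 1)) (Set.Iio (π.length - 1)) := hlen ▸ hf.1
  obtain ⟨c, hc⟩ := hf.exists_isOrientation
  exact ⟨bgPath π.length f c, nodup_bgPath c hbij.surjOn,
    fun p => ⟨fst_lt_of_mem_bgPath c hbij.mapsTo, mem_bgPath_of_fst_lt c hbij.surjOn⟩,
    isChain_bgPath c hlen hc⟩

/-- adding the green edges (adjacencies of `π`) to the blue
edges of `ACG(π, τ, f)` yields a single alternating path covering all nodes. -/
theorem blue_green_form_path [DecidableEq α] (r₀ : α)
    (π τ : List (SSym α)) (f : ℕ → ℕ)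
    (hπ : IsChromosome r₀ π) (hτ : IsChromosome r₀ τ)
    (hrel : Related π τ) (hA : adjMS π = adjMS τ)
    (hf : AdjBijection π τ f) :
    ∃ L : List NodePos, L.Nodup ∧
      (∀ p : NodePos, p ∈ L ↔ p.1 < π.length) ∧
      List.Chain' (BGStep π τ f) L :=
  blue_green_form_path_general r₀ π τ f hπ hA hf
end
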